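/- The stripped partition (PLI) lemma: the functional dependency X → Y holds on a relation instance r if and only if the partition of r induced by X equals (refines to no finer than) the partition induced by X ∪ Y; equivalently, the number of equivalence classes of the 'agree on X' relation equals the number of equivalence classes of the 'agree on X ∪ Y' relation. -/

import Mathlib

variable {α V : Type*}

/-- Two tuples agree on an attribute set `X`. -/
def Agrees (X : Set α) (t₁ t₂ : α → V) : Prop := ∀ a ∈ X, t₁ a = t₂ a

/-- The functional dependency `X → Y` holds on the relation instance `r`. -/
def FDHolds (r : Set (α → V)) (X Y : Set α) : Prop :=
  ∀ t₁ ∈ r, ∀ t₂ ∈ r, Agrees X t₁ t₂ → Agrees Y t₁ t₂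

/-!
Restricting a tuple to `X ∪ Y` and then to `X` is restricting it to `X`, so the restrictions
of `r` to `X` are the image of its restrictions to `X ∪ Y` under the projection onto `X`.
The FD `X → Y` says exactly that this projection is injective on `r`'s restrictions to `X ∪ Y`,
and a map on a finite set is injective iff it preserves the cardinality.
-/

open Set

theorem agrees_iff_domRestrict_eq {X : Set α} {t₁ t₂ : α → V} :
    Agrees X t₁ t₂ ↔ X.domRestrict t₁ = X.domRestrict t₂ :=
  domRestrict_eq_domRestrict_iff.symm

theorem agrees_union_iff {X Y : Set α} {t₁ t₂ : α → V} :
    Agrees (X ∪ Y) t₁ t₂ ↔ Agrees X t₁ t₂ ∧ Agrees Y t₁ t₂ :=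
  eqOn_union

theorem fdHolds_iff_injOn_domRestrict₂ (r : Set (α → V)) (X Y : Set α) :
    FDHolds r X Y ↔
      InjOn (domRestrict₂ subset_union_left) ((X ∪ Y).domRestrict '' r) := by
  simp only [InjOn, forall_mem_image]
  change _ ↔ ∀ t₁ ∈ r, ∀ t₂ ∈ r,
    X.domRestrict t₁ = X.domRestrict t₂ → (X ∪ Y).domRestrict t₁ = (X ∪ Y).domRestrict t₂
  simp only [FDHolds, ← agrees_iff_domRestrict_eq, agrees_union_iff]
  exact forall₄_congr fun _ _ _ _ ↦ ⟨fun hY hX ↦ ⟨hX, hY hX⟩, fun h hX ↦ (h hX).2⟩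

/-- PLI lemma: on a finite relation instance `r`, the FD `X → Y` holds iff the number of
equivalence classes of the "agree on `X`" relation (i.e. the number of distinct restrictions
of tuples of `r` to `X`) equals the number of equivalence classes of the
"agree on `X ∪ Y`" relation. -/
theorem fd_holds_iff_partition_card_eq (r : Set (α → V)) (hr : r.Finite) (X Y : Set α) :
    FDHolds r X Y ↔ (X.restrict '' r).ncard = ((X ∪ Y).restrict '' r).ncard := by
  rw [fdHolds_iff_injOn_domRestrict₂, ← ncard_image_iff (hr.image _), image_image]
  rfl
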